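/- arXiv:2402.06814 — 5 statements merged into one kernel-verified Lean document; each statement's English description precedes it below -/
import Mathlib

section
/- The F₂-rank of the base matrix H_b equals exactly 4t − 1. -/
open Finset
open Matrix

/-- Column index set of the base matrix `H_b`: all binary vectors of length `4t`
of Hamming weight two whose two nonzero positions differ by an odd number. -/
def colIdx (t : ℕ) := {p : Fin (4*t) × Fin (4*t) // p.1 < p.2 ∧ Odd (p.2.val - p.1.val)}

instance (t : ℕ) : Fintype (colIdx t) := by unfold colIdx; infer_instance

instance (t : ℕ) : DecidableEq (colIdx t) := by unfold colIdx; infer_instance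

/-- The base matrix `H_b` of the FDPC construction. -/
def Hb (t : ℕ) : Matrix (Fin (4*t)) (colIdx t) (ZMod 2) :=
  fun r c => if r = c.1.1 ∨ r = c.1.2 then 1 else 0

/-- Hamming weight of a vector. -/
def wt {ι : Type*} [Fintype ι] (x : ι → ZMod 2) : ℕ :=
  (Finset.univ.filter fun i => x i ≠ 0).card

lemma mulVec_eval (t : ℕ) (x : Fin (4*t) → ZMod 2) (c : colIdx t) :
    ((Hb t)ᵀ *ᵥ x) c = x c.1.1 + x c.1.2 := by
  obtain ⟨⟨a, b⟩, hab, hodd⟩ := c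
  have hne : a ≠ b := ne_of_lt hab
  simp only [Matrix.mulVec, Matrix.transpose_apply, Hb, dotProduct]
  change ∑ r : Fin (4*t), (if r = a ∨ r = b then (1:ZMod 2) else 0) * x r = x a + x b
  have : ∀ r : Fin (4*t), (if r = a ∨ r = b then (1:ZMod 2) else 0) * x r
      = (if r = a then x a else 0) + (if r = b then x b else 0) := by
    intro r
    by_cases h1 : r = a <;> by_cases h2 : r = b <;> simp_all
  simp only [this, Finset.sum_add_distrib, Finset.sum_ite_eq', Finset.mem_univ, if_true]

/-- The `F₂`-rank of the base matrix `H_b` equals exactly `4t − 1`. -/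
theorem stmt_3 (t : ℕ) (ht : 2 ≤ t) : (Hb t).rank = 4 * t - 1 := by
  have h4 : 0 < 4 * t := by omega
  have h1lt : 1 < 4 * t := by omega
  set z : Fin (4*t) := ⟨0, h4⟩
  set o : Fin (4*t) := ⟨1, h1lt⟩
  have hker : LinearMap.ker ((Hb t)ᵀ.mulVecLin)
      = Submodule.span (ZMod 2) {(fun _ => 1 : Fin (4*t) → ZMod 2)} := by
    apply le_antisymm
    · intro x hx
      rw [LinearMap.mem_ker, Matrix.mulVecLin_apply] at hx
      have heq : ∀ c : colIdx t, x c.1.1 = x c.1.2 := by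
        intro c
        have h := congrFun hx c
        rw [mulVec_eval] at h
        have h2 : x c.1.1 = -x c.1.2 := eq_neg_of_add_eq_zero_left h
        rwa [CharTwo.neg_eq] at h2
      have key : ∀ i : Fin (4*t), x i = x z := by
        intro i
        by_cases hi : Odd i.val
        · have hz : z < i := by
            have : 0 < i.val := by rcases hi with ⟨k, hk⟩; omega
            exact Fin.mk_lt_of_lt_val this
          have := heq ⟨(z, i), hz, by simpa [z] using hi⟩
          exact this.symm
        · by_cases h0 : i.val = 0
          · congr 1
            exact Fin.ext h0
          · have h2 : 2 ≤ i.val := by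
              rw [Nat.odd_iff] at hi; omega
            have ho : o < i := Fin.mk_lt_of_lt_val (by omega)
            have hodd1 : Odd (i.val - o.val) := by
              rw [Nat.odd_iff] at hi ⊢
              simp only [o]
              omega
            have e1 := heq ⟨(o, i), ho, hodd1⟩
            have hzo : z < o := Fin.mk_lt_of_lt_val (by simp [o])
            have e2 := heq ⟨(z, o), hzo, by simp [z, o]⟩
            simp only at e1 e2
            rw [← e1, ← e2]
      refine Submodule.mem_span_singleton.2 ⟨x z, ?_⟩
      funext i
      simp [key i]
    · rw [Submodule.span_le, Set.singleton_subset_iff]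
      rw [SetLike.mem_coe, LinearMap.mem_ker, Matrix.mulVecLin_apply]
      funext c
      rw [mulVec_eval, Pi.zero_apply]
      exact CharTwo.add_self_eq_zero 1
  have hcount := LinearMap.finrank_range_add_finrank_ker ((Hb t)ᵀ.mulVecLin)
  rw [hker] at hcount
  have hone : (fun _ => (1:ZMod 2) : Fin (4*t) → ZMod 2) ≠ 0 := by
    intro h
    have := congrFun h z
    simp at this
  rw [finrank_span_singleton hone] at hcount
  have htot : Module.finrank (ZMod 2) (Fin (4*t) → ZMod 2) = 4*t := by
    simp [Module.finrank_pi]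
  rw [htot] at hcount
  rw [← Matrix.rank_transpose, Matrix.rank]
  omega
end

section
/- No column of H_b is zero, no two distinct columns of H_b are equal, and no three distinct columns of H_b sum to zero over F₂. -/
open Finset

lemma col_even_sum (t : ℕ) (c : colIdx t) :
    ∑ r ∈ univ.filter (fun r : Fin (4*t) => Even r.val), Hb t r c = 1 := by
  obtain ⟨⟨a, b⟩, hlt, hodd⟩ := c
  have hab : a ≠ b := Fin.ne_of_lt hlt
  have hpar : Even a.val ↔ ¬ Even b.val := by
    obtain ⟨k, hk⟩ := hodd
    have hle : a.val < b.val := hlt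
    have hk' : b.val - a.val = 2*k+1 := hk
    rw [Nat.even_iff, Nat.even_iff]
    omega
  have hsplit : ∀ r : Fin (4*t), Hb t r ⟨(a, b), hlt, hodd⟩ =
      (if r = a then (1 : ZMod 2) else 0) + (if r = b then 1 else 0) := by
    intro r
    by_cases h1 : r = a <;> by_cases h2 : r = b <;>
      simp_all [Hb]
  rw [Finset.sum_congr rfl (fun r _ => hsplit r), Finset.sum_add_distrib,
    Finset.sum_ite_eq' _ a (fun _ => (1 : ZMod 2)),
    Finset.sum_ite_eq' _ b (fun _ => (1 : ZMod 2))]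
  simp only [Finset.mem_filter, Finset.mem_univ, true_and]
  by_cases ha : Even a.val
  · rw [if_pos ha, if_neg (hpar.mp ha)]; ring
  · rw [if_neg ha, if_pos (not_not.mp (fun hb => ha (hpar.mpr hb)))]; ring

/-- No column of `H_b` is zero, no two distinct columns of `H_b` are equal, and
no three distinct columns of `H_b` sum to zero over `F₂`. -/
theorem stmt_4 (t : ℕ) (ht : 2 ≤ t) :
    (∀ c : colIdx t, (fun r => Hb t r c) ≠ 0) ∧
    (∀ c c' : colIdx t, (fun r => Hb t r c) = (fun r => Hb t r c') → c = c') ∧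
    (∀ c₁ c₂ c₃ : colIdx t, c₁ ≠ c₂ → c₁ ≠ c₃ → c₂ ≠ c₃ →
      (fun r => Hb t r c₁ + Hb t r c₂ + Hb t r c₃) ≠ 0) := by
  refine ⟨?_, ?_, ?_⟩
  · intro c h
    have h1 := congrFun h c.1.1
    simp [Hb] at h1
  · rintro ⟨⟨a, b⟩, hlt, hodd⟩ ⟨⟨a', b'⟩, hlt', hodd'⟩ h
    have key : ∀ r : Fin (4*t), (r = a ∨ r = b) ↔ (r = a' ∨ r = b') := by
      intro r
      have := congrFun h r
      simp only [Hb] at this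
      constructor <;> intro hr <;> by_contra hr' <;> simp [hr, hr'] at this
    have hlt1 : a.val < b.val := hlt
    have hlt2 : a'.val < b'.val := hlt'
    have k1 := (key a).mp (Or.inl rfl)
    have k2 := (key b).mp (Or.inr rfl)
    have k3 := (key a').mpr (Or.inl rfl)
    have k4 := (key b').mpr (Or.inr rfl)
    have haa' : a = a' := by
      apply Fin.ext
      rcases k1 with h1 | h1 <;> rcases k3 with h2 | h2 <;>
        [skip; skip; skip; skip] <;>
        (try exact congrArg Fin.val h1) <;>
        (try exact (congrArg Fin.val h2).symm) <;>
        (have e1 := congrArg Fin.val h1; have e2 := congrArg Fin.val h2; omega)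
    have hbb' : b = b' := by
      apply Fin.ext
      rcases k2 with h1 | h1
      · have e1 : b.val = a'.val := congrArg Fin.val h1
        have e2 : a.val = a'.val := congrArg Fin.val haa'
        omega
      · exact congrArg Fin.val h1
    subst haa'; subst hbb'; rfl
  · intro c₁ c₂ c₃ _ _ _ h
    have hs : ∑ r ∈ univ.filter (fun r : Fin (4*t) => Even r.val),
        (Hb t r c₁ + Hb t r c₂ + Hb t r c₃) = 0 := by
      rw [Finset.sum_congr rfl (fun r _ => congrFun h r)]; simp
    rw [Finset.sum_add_distrib, Finset.sum_add_distrib, col_even_sum, col_even_sum,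
      col_even_sum] at hs
    exact absurd hs (by decide)
end

section
/- There exist four distinct columns of H_b summing to zero over F₂; consequently, the code C_b with parity-check matrix H_b has minimum distance exactly 4. -/
open Finset Matrix

-- auxiliary lemmas

lemma Hb_val (t : ℕ) (r : Fin (4*t)) (c : colIdx t) :
    Hb t r c = if r.val = c.1.1.val ∨ r.val = c.1.2.val then 1 else 0 := by
  simp [Hb, Fin.ext_iff]

-- column weighted sum
lemma col_sum (t : ℕ) (c : colIdx t) :
    ∑ r, ((r.val : ZMod 2)) * Hb t r c = (c.1.1.val : ZMod 2) + (c.1.2.val : ZMod 2) := by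
  have hne : c.1.1 ≠ c.1.2 := ne_of_lt c.2.1
  have : ∀ r : Fin (4*t), ((r.val : ZMod 2)) * Hb t r c
      = (if r = c.1.1 then ((c.1.1.val : ZMod 2)) else 0)
      + (if r = c.1.2 then ((c.1.2.val : ZMod 2)) else 0) := by
    intro r
    unfold Hb
    by_cases h1 : r = c.1.1 <;> by_cases h2 : r = c.1.2 <;> simp_all
  rw [Finset.sum_congr rfl (fun r _ => this r), Finset.sum_add_distrib]
  simp

lemma col_sum_one (t : ℕ) (c : colIdx t) :
    (c.1.1.val : ZMod 2) + (c.1.2.val : ZMod 2) = 1 := by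
  obtain ⟨hlt, hodd⟩ := c.2
  have : (c.1.1.val + c.1.2.val) % 2 = 1 := by
    rw [Nat.odd_iff] at hodd; omega
  calc (c.1.1.val : ZMod 2) + (c.1.2.val : ZMod 2) = ((c.1.1.val + c.1.2.val : ℕ) : ZMod 2) := by push_cast; ring
    _ = (((c.1.1.val + c.1.2.val) % 2 : ℕ) : ZMod 2) := by rw [ZMod.natCast_mod]
    _ = 1 := by rw [‹(c.1.1.val + c.1.2.val) % 2 = 1›]; norm_num


lemma zmod2_cases (a : ZMod 2) : a = 0 ∨ a = 1 := by fin_cases a <;> simp <;> tauto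

-- support card even for kernel vectors
lemma support_even (t : ℕ) (x : colIdx t → ZMod 2) (hx : Hb t *ᵥ x = 0) :
    Even (Finset.univ.filter fun c => x c ≠ 0).card := by
  have key : ((Finset.univ.filter fun c => x c ≠ 0).card : ZMod 2) = 0 := by
    have h1 : ∑ r, ((r.val : ZMod 2)) * (Hb t *ᵥ x) r = 0 := by
      rw [hx]; simp
    have h2 : ∑ r, ((r.val : ZMod 2)) * (Hb t *ᵥ x) r = ∑ c, x c := by
      simp only [Matrix.mulVec, dotProduct, Finset.mul_sum]
      rw [Finset.sum_comm]
      refine Finset.sum_congr rfl fun c _ => ?_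
      calc ∑ r, (r.val : ZMod 2) * (Hb t r c * x c)
          = (∑ r, (r.val : ZMod 2) * Hb t r c) * x c := by
            rw [Finset.sum_mul]; exact Finset.sum_congr rfl fun r _ => by ring
        _ = x c := by rw [col_sum, col_sum_one, one_mul]
    have h3 : ∑ c, x c = ((Finset.univ.filter fun c => x c ≠ 0).card : ZMod 2) := by
      rw [← Finset.sum_filter_ne_zero]
      rw [Finset.card_eq_sum_ones]
      push_cast
      refine Finset.sum_congr rfl fun c hc => ?_
      rcases zmod2_cases (x c) with h | h
      · simp [h] at hc
      · simp [h]
    rw [h1] at h2; rw [h3] at h2; exact h2.symm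
  have := (ZMod.natCast_eq_zero_iff _ 2).mp key
  exact even_iff_two_dvd.mpr this

lemma mulVec_supp (t : ℕ) (x : colIdx t → ZMod 2) (r : Fin (4*t)) :
    (Hb t *ᵥ x) r = ∑ c ∈ Finset.univ.filter (fun c => x c ≠ 0), Hb t r c := by
  simp only [Matrix.mulVec, dotProduct]
  rw [← Finset.sum_filter_ne_zero (s := Finset.univ)]
  have hsub : (Finset.univ.filter fun c => Hb t r c * x c ≠ 0)
      ⊆ Finset.univ.filter (fun c => x c ≠ 0) := by
    intro c hc
    simp only [Finset.mem_filter, Finset.mem_univ, true_and] at *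
    intro h; exact hc (by rw [h, mul_zero])
  rw [Finset.sum_subset hsub]
  · refine Finset.sum_congr rfl fun c hc => ?_
    simp only [Finset.mem_filter] at hc
    rcases zmod2_cases (x c) with h | h
    · exact absurd h hc.2
    · rw [h, mul_one]
  · intro c _ hc
    simp only [Finset.mem_filter, Finset.mem_univ, true_and, not_not] at hc
    exact hc

lemma Hb_eq_one (t : ℕ) {r : Fin (4*t)} {c : colIdx t} (h : Hb t r c = 1) :
    r.val = c.1.1.val ∨ r.val = c.1.2.val := by
  rw [Hb_val] at h
  by_contra hc
  rw [if_neg hc] at h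
  exact zero_ne_one h

lemma card_ne_two (t : ℕ) (x : colIdx t → ZMod 2) (hx : Hb t *ᵥ x = 0) :
    (Finset.univ.filter fun c => x c ≠ 0).card ≠ 2 := by
  intro h2
  obtain ⟨c, d, hcd, hS⟩ := Finset.card_eq_two.mp h2
  have hval : ∀ r : Fin (4*t), Hb t r c + Hb t r d = 0 := by
    intro r
    have := mulVec_supp t x r
    rw [hx, hS] at this
    simpa [Finset.sum_pair hcd] using this.symm
  have key : ∀ r : Fin (4*t), Hb t r c = 1 → (r.val = d.1.1.val ∨ r.val = d.1.2.val) := by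
    intro r hr
    have := hval r
    rw [hr] at this
    have hd : Hb t r d = 1 := by
      rcases zmod2_cases (Hb t r d) with h | h
      · rw [h] at this; norm_num at this
      · exact h
    exact Hb_eq_one t hd
  have h1 : Hb t c.1.1 c = 1 := by rw [Hb_val]; simp
  have h2' : Hb t c.1.2 c = 1 := by rw [Hb_val]; simp
  have e1 := key _ h1
  have e2 := key _ h2'
  have hcl : c.1.1.val < c.1.2.val := c.2.1
  have hdl : d.1.1.val < d.1.2.val := d.2.1
  apply hcd
  have hv1 : c.1.1.val = d.1.1.val := by omega
  have hv2 : c.1.2.val = d.1.2.val := by omega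
  exact Subtype.ext (Prod.ext (Fin.ext hv1) (Fin.ext hv2))

/-- There exist four distinct columns of `H_b` summing to zero over `F₂`;
consequently the code `C_b = ker H_b` has minimum distance exactly `4`. -/
theorem stmt_5 (t : ℕ) (ht : 2 ≤ t) :
    (∃ c₁ c₂ c₃ c₄ : colIdx t, c₁ ≠ c₂ ∧ c₁ ≠ c₃ ∧ c₁ ≠ c₄ ∧ c₂ ≠ c₃ ∧ c₂ ≠ c₄ ∧ c₃ ≠ c₄ ∧
      (fun r => Hb t r c₁ + Hb t r c₂ + Hb t r c₃ + Hb t r c₄) = 0) ∧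
    (∃ x : colIdx t → ZMod 2, Hb t *ᵥ x = 0 ∧ x ≠ 0 ∧ wt x = 4) ∧
    (∀ x : colIdx t → ZMod 2, Hb t *ᵥ x = 0 → x ≠ 0 → 4 ≤ wt x) := by
  have h0 : (0:ℕ) < 4*t := by omega
  have h1 : (1:ℕ) < 4*t := by omega
  have h2 : (2:ℕ) < 4*t := by omega
  have h3 : (3:ℕ) < 4*t := by omega
  let a0 : Fin (4*t) := ⟨0, h0⟩
  let a1 : Fin (4*t) := ⟨1, h1⟩
  let a2 : Fin (4*t) := ⟨2, h2⟩
  let a3 : Fin (4*t) := ⟨3, h3⟩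
  let e1 : colIdx t := ⟨(a0, a1), ⟨Fin.mk_lt_mk.mpr (by norm_num), ⟨0, rfl⟩⟩⟩
  let e2 : colIdx t := ⟨(a1, a2), ⟨Fin.mk_lt_mk.mpr (by norm_num), ⟨0, rfl⟩⟩⟩
  let e3 : colIdx t := ⟨(a2, a3), ⟨Fin.mk_lt_mk.mpr (by norm_num), ⟨0, rfl⟩⟩⟩
  let e4 : colIdx t := ⟨(a0, a3), ⟨Fin.mk_lt_mk.mpr (by norm_num), ⟨1, rfl⟩⟩⟩
  have ne12 : e1 ≠ e2 := by
    intro h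
    have := congrArg (fun z : colIdx t => z.1.1.val) h
    simp [e1, e2, e3, e4, a0, a1, a2, a3] at this
  have ne13 : e1 ≠ e3 := by
    intro h
    have := congrArg (fun z : colIdx t => z.1.1.val) h
    simp [e1, e2, e3, e4, a0, a1, a2, a3] at this
  have ne14 : e1 ≠ e4 := by
    intro h
    have := congrArg (fun z : colIdx t => z.1.2.val) h
    simp [e1, e2, e3, e4, a0, a1, a2, a3] at this
  have ne23 : e2 ≠ e3 := by
    intro h
    have := congrArg (fun z : colIdx t => z.1.1.val) h
    simp [e1, e2, e3, e4, a0, a1, a2, a3] at this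
  have ne24 : e2 ≠ e4 := by
    intro h
    have := congrArg (fun z : colIdx t => z.1.1.val) h
    simp [e1, e2, e3, e4, a0, a1, a2, a3] at this
  have ne34 : e3 ≠ e4 := by
    intro h
    have := congrArg (fun z : colIdx t => z.1.1.val) h
    simp [e1, e2, e3, e4, a0, a1, a2, a3] at this
  have hsum : (fun r => Hb t r e1 + Hb t r e2 + Hb t r e3 + Hb t r e4) = 0 := by
    funext r
    simp only [Hb, Fin.ext_iff, Fin.val_mk, e1, e2, e3, e4, a0, a1, a2, a3, Pi.zero_apply]
    split_ifs <;> first | decide | omega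
  refine ⟨⟨e1, e2, e3, e4, ne12, ne13, ne14, ne23, ne24, ne34, hsum⟩, ?_, ?_⟩
  · set S0 : Finset (colIdx t) := {e1, e2, e3, e4} with hS0
    refine ⟨fun c => if c ∈ S0 then 1 else 0, ?_, ?_, ?_⟩
    · funext r
      have : (Hb t *ᵥ fun c => if c ∈ S0 then 1 else 0) r = ∑ c ∈ S0, Hb t r c := by
        simp only [Matrix.mulVec, dotProduct, mul_ite, mul_one, mul_zero]
        rw [Finset.sum_ite_mem, Finset.univ_inter]
      rw [this, hS0]
      rw [Finset.sum_insert (by simp [ne12, ne13, ne14]),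
          Finset.sum_insert (by simp [ne23, ne24]),
          Finset.sum_insert (by simp [ne34]), Finset.sum_singleton]
      have := congrFun hsum r
      simpa [add_assoc] using this
    · intro h
      have := congrFun h e1
      simp [S0] at this
    · have hfilt : (Finset.univ.filter fun c => (if c ∈ S0 then (1:ZMod 2) else 0) ≠ 0) = S0 := by
        ext c
        by_cases hc : c ∈ S0 <;> simp [hc]
      rw [wt, hfilt, hS0]
      rw [Finset.card_insert_of_notMem (by simp [ne12, ne13, ne14]),
          Finset.card_insert_of_notMem (by simp [ne23, ne24]),
          Finset.card_insert_of_notMem (by simp [ne34]), Finset.card_singleton]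
  · intro x hx hx0
    have heven := support_even t x hx
    have hne2 := card_ne_two t x hx
    have hne0 : (Finset.univ.filter fun c => x c ≠ 0).card ≠ 0 := by
      intro h
      apply hx0
      funext c
      show x c = 0
      by_contra hc
      have : c ∈ Finset.univ.filter fun c => x c ≠ 0 := by simp [hc]
      rw [Finset.card_eq_zero.mp h] at this
      exact absurd this (Finset.notMem_empty c)
    obtain ⟨k, hk⟩ := heven
    rw [wt]
    omega
end

section
/- There are no irreducible codewords of odd weight, of weight 2, or of weight exceeding 4t in C_b. -/
open Finset Matrix

/-- A codeword of `C_b = ker H_b` is *irreducible* if it is nonzero and cannot be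
written as the sum of two nonzero codewords with disjoint supports (equivalently,
the subgraph of the Tanner graph induced by its support is a single cycle). -/
def Irred (t : ℕ) (x : colIdx t → ZMod 2) : Prop :=
  Hb t *ᵥ x = 0 ∧ x ≠ 0 ∧
  ¬ ∃ a b : colIdx t → ZMod 2, Hb t *ᵥ a = 0 ∧ Hb t *ᵥ b = 0 ∧ a ≠ 0 ∧ b ≠ 0 ∧
      (∀ c, a c = 0 ∨ b c = 0) ∧ x = a + b

lemma zmod2_eq_one {v : ZMod 2} (h : v ≠ 0) : v = 1 := by revert h; revert v; decide

lemma colIdx_parity {t : ℕ} (c : colIdx t) : Even c.1.1.val ↔ ¬ Even c.1.2.val := by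
  have h1 : c.1.1.val < c.1.2.val := c.2.1
  obtain ⟨k, hk⟩ := c.2.2
  rw [Nat.even_iff, Nat.even_iff]
  omega

lemma colIdx_lt {t : ℕ} (c : colIdx t) : c.1.1.val < c.1.2.val := c.2.1

/-- There are no irreducible codewords of odd weight, of weight `2`, or of weight
exceeding `4t` in `C_b`. -/
theorem stmt_10 (t : ℕ) (ht : 2 ≤ t) (x : colIdx t → ZMod 2) (hx : Irred t x) :
    Even (wt x) ∧ wt x ≠ 2 ∧ wt x ≤ 4 * t := by
  classical
  obtain ⟨hker0, hx0, hirr⟩ := hx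
  have hker : ∀ r, ∑ c : colIdx t, Hb t r c * x c = 0 := by
    intro r
    have := congrFun hker0 r
    simpa [Matrix.mulVec, dotProduct] using this
  set S : Finset (colIdx t) := Finset.univ.filter (fun c => x c ≠ 0) with hS
  have hxS : ∀ c : colIdx t, c ∉ S → x c = 0 := by
    intro c hc
    by_contra h
    exact hc (Finset.mem_filter.mpr ⟨Finset.mem_univ c, h⟩)
  have hxS1 : ∀ c ∈ S, x c = 1 := fun c hc => zmod2_eq_one (Finset.mem_filter.mp hc).2
  have hwtS : wt x = S.card := rfl
  -- Part 1: evenness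
  set E : Finset (Fin (4*t)) := Finset.univ.filter (fun r => Even r.val) with hE
  have hcol : ∀ c : colIdx t, (∑ r ∈ E, Hb t r c) = 1 := by
    intro c
    simp only [Hb]
    rw [Finset.sum_boole]
    by_cases he : Even c.1.1.val
    · have : E.filter (fun r => r = c.1.1 ∨ r = c.1.2) = {c.1.1} := by
        ext r
        simp only [hE, Finset.mem_filter, Finset.mem_univ, true_and, Finset.mem_singleton]
        constructor
        · rintro ⟨hre, rfl | rfl⟩
          · rfl
          · exact absurd hre ((colIdx_parity c).mp he)
        · rintro rfl; exact ⟨he, Or.inl rfl⟩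
      rw [this]; simp
    · have ho : Even c.1.2.val := by
        by_contra h
        exact he ((colIdx_parity c).mpr h)
      have : E.filter (fun r => r = c.1.1 ∨ r = c.1.2) = {c.1.2} := by
        ext r
        simp only [hE, Finset.mem_filter, Finset.mem_univ, true_and, Finset.mem_singleton]
        constructor
        · rintro ⟨hre, rfl | rfl⟩
          · exact absurd hre he
          · rfl
        · rintro rfl; exact ⟨ho, Or.inr rfl⟩
      rw [this]; simp
  have hsum0 : ∑ c : colIdx t, x c = 0 := by
    have h0 : ∑ r ∈ E, ∑ c : colIdx t, Hb t r c * x c = 0 :=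
      Finset.sum_eq_zero (fun r _ => hker r)
    rw [Finset.sum_comm] at h0
    rw [← h0]
    apply Finset.sum_congr rfl
    intro c _
    rw [← Finset.sum_mul, hcol c, one_mul]
  have hcast : ((wt x : ℕ) : ZMod 2) = 0 := by
    rw [hwtS]
    have : ∑ c : colIdx t, x c = (S.card : ZMod 2) := by
      rw [← Finset.sum_subset (Finset.subset_univ S) (fun c _ hc => hxS c hc)]
      rw [Finset.sum_congr rfl hxS1]
      simp
    rw [← this, hsum0]
  have heven : Even (wt x) := by
    have := (ZMod.natCast_eq_zero_iff (wt x) 2).mp hcast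
    exact even_iff_two_dvd.mpr this
  refine ⟨heven, ?_, ?_⟩
  -- Part 2: weight ≠ 2
  · intro h2
    rw [hwtS] at h2
    obtain ⟨c₁, c₂, hne, hS2⟩ := Finset.card_eq_two.mp h2
    have hm1 : c₁ ∈ S := by rw [hS2]; simp
    have hm2 : c₂ ∈ S := by rw [hS2]; simp
    have key : ∀ r : Fin (4*t), Hb t r c₁ + Hb t r c₂ = 0 := by
      intro r
      have h := hker r
      rw [← Finset.sum_subset (Finset.subset_univ S)
        (fun c _ hc => by rw [hxS c hc, mul_zero])] at h
      rw [hS2, Finset.sum_pair hne, hxS1 c₁ hm1, hxS1 c₂ hm2, mul_one, mul_one] at h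
      exact h
    have hinc : ∀ r : Fin (4*t), (r = c₁.1.1 ∨ r = c₁.1.2) → (r = c₂.1.1 ∨ r = c₂.1.2) := by
      intro r hr
      have h := key r
      by_contra hc
      simp only [Hb] at h
      rw [if_pos hr, if_neg hc] at h
      simpa using h
    have e1 := hinc c₁.1.1 (Or.inl rfl)
    have e2 := hinc c₁.1.2 (Or.inr rfl)
    have v1 := colIdx_lt c₁
    have v2 := colIdx_lt c₂
    have hval : c₁.1.1.val = c₂.1.1.val ∧ c₁.1.2.val = c₂.1.2.val := by
      rcases e1 with h1 | h1 <;> rcases e2 with h2 | h2 <;>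
        · have a := congrArg Fin.val h1
          have b := congrArg Fin.val h2
          constructor <;> omega
    exact hne (Subtype.ext (Prod.ext (Fin.val_injective hval.1) (Fin.val_injective hval.2)))
  -- Part 3: weight ≤ 4t
  · by_contra hgt
    push_neg at hgt
    rw [hwtS] at hgt heven
    have hcard : 4*t + 2 ≤ S.card := by
      obtain ⟨k, hk⟩ := heven
      omega
    haveI : Fact (Nat.Prime 2) := ⟨Nat.prime_two⟩
    set M : Matrix (Fin (4*t)) {c : colIdx t // c ∈ S} (ZMod 2) :=
      fun r s => Hb t r s.1 with hM
    set φ := M.mulVecLin with hφ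
    -- extension of a vector on S by zero
    have hext : ∀ y : {c : colIdx t // c ∈ S} → ZMod 2,
        Hb t *ᵥ (fun c => if h : c ∈ S then y ⟨c, h⟩ else 0) = φ y := by
      intro y
      funext r
      simp only [hφ, Matrix.mulVecLin_apply, Matrix.mulVec, dotProduct, hM]
      rw [← Finset.sum_subset (Finset.subset_univ S)
        (fun c _ hc => by rw [dif_neg hc, mul_zero])]
      rw [← Finset.sum_attach S (fun c => Hb t r c * (if h : c ∈ S then y ⟨c, h⟩ else 0))]
      show _ = ∑ s ∈ S.attach, Hb t r s.1 * y s
      apply Finset.sum_congr rfl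
      intro s _
      rw [dif_pos s.2]
    set x' : {c : colIdx t // c ∈ S} → ZMod 2 := fun s => x s.1 with hx'
    have hx'ext : (fun c => if h : c ∈ S then x' ⟨c, h⟩ else 0) = x := by
      funext c
      by_cases h : c ∈ S
      · rw [dif_pos h]
      · rw [dif_neg h, hxS c h]
    have hx'ker : φ x' = 0 := by rw [← hext x', hx'ext]; exact hker0
    have hx'0 : x' ≠ 0 := by
      intro h
      apply hx0
      rw [← hx'ext, h]
      funext c
      by_cases hc : c ∈ S <;> simp [hc]
    -- dimension count
    have hrank := LinearMap.finrank_range_add_finrank_ker φ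
    have hr1 : Module.finrank (ZMod 2) ({c : colIdx t // c ∈ S} → ZMod 2) = S.card := by
      rw [Module.finrank_fintype_fun_eq_card, Fintype.card_coe]
    have hr2 : Module.finrank (ZMod 2) ↥(LinearMap.range φ) ≤ 4*t := by
      have h := Submodule.finrank_le (LinearMap.range φ)
      rwa [Module.finrank_fintype_fun_eq_card, Fintype.card_fin] at h
    have hker2 : 2 ≤ Module.finrank (ZMod 2) ↥(LinearMap.ker φ) := by omega
    have hy : ∃ y ∈ LinearMap.ker φ, y ≠ 0 ∧ y ≠ x' := by
      by_contra hcon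
      push_neg at hcon
      have hle : LinearMap.ker φ ≤ Submodule.span (ZMod 2) {x'} := by
        intro y hy
        by_cases h0 : y = 0
        · rw [h0]; exact Submodule.zero_mem _
        · rw [hcon y hy h0]
          exact Submodule.mem_span_singleton_self x'
      have h1 := Submodule.finrank_mono hle
      rw [finrank_span_singleton hx'0] at h1
      omega
    obtain ⟨y, hyk, hy0, hyx⟩ := hy
    have hyk' : φ y = 0 := LinearMap.mem_ker.mp hyk
    set a : colIdx t → ZMod 2 := fun c => if h : c ∈ S then y ⟨c, h⟩ else 0 with ha
    set b : colIdx t → ZMod 2 := x + a with hb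
    apply hirr
    refine ⟨a, b, ?_, ?_, ?_, ?_, ?_, ?_⟩
    · rw [ha, hext y]; exact hyk'
    · rw [hb, Matrix.mulVec_add, hker0]
      rw [ha, hext y, hyk']
      simp
    · intro h
      apply hy0
      funext s
      have := congrFun h s.1
      rw [ha] at this
      simp only [dif_pos s.2, Pi.zero_apply] at this
      simpa using this
    · intro h
      apply hyx
      funext s
      have := congrFun h s.1
      rw [hb] at this
      have h2 : x s.1 + a s.1 = 0 := this
      have h3 : a s.1 = x s.1 :=
        (eq_neg_of_add_eq_zero_right h2).trans (CharTwo.neg_eq _)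
      rw [ha] at h3
      simp only [dif_pos s.2] at h3
      rw [hx']
      simpa using h3
    · intro c
      by_cases h0 : a c = 0
      · exact Or.inl h0
      · right
        have hcS : c ∈ S := by
          by_contra hc
          exact h0 (by rw [ha]; simp [hc])
        have ha1 : a c = 1 := zmod2_eq_one h0
        have hx1 : x c = 1 := hxS1 c hcS
        show x c + a c = 0
        rw [ha1, hx1]
        exact CharTwo.add_self_eq_zero 1
    · funext c
      show x c = a c + (x c + a c)
      rw [add_comm (x c) (a c), ← add_assoc, CharTwo.add_self_eq_zero, zero_add]
end

section
/- The number A_w of codewords of weight w in C_b satisfies A_w ≤ Σ ∏_m C(A_m^{(ir)}, a_m), where the sum ranges over all tuples of nonnegative integers (a_4, a_6, …, a_{4t}) with Σ_m m·a_m = w, and A_m^{(ir)} = ∏_{i=0}^{m/2−1}(2t−i)²/m. -/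
open Finset Matrix

namespace FDPC

variable {t : ℕ}

def supp (x : colIdx t → ZMod 2) : Finset (colIdx t) := univ.filter (fun c => x c ≠ 0)

lemma wt_eq_card_supp (x : colIdx t → ZMod 2) : wt x = (supp x).card := rfl

lemma mem_supp {x : colIdx t → ZMod 2} {c : colIdx t} : c ∈ supp x ↔ x c ≠ 0 := by
  simp [supp]

def deg (x : colIdx t → ZMod 2) (r : Fin (4*t)) : ℕ :=
  ((supp x).filter (fun c => r = c.1.1 ∨ r = c.1.2)).card

lemma zmod2_cases (a : ZMod 2) : a = 0 ∨ a = 1 := by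
  fin_cases a
  · exact Or.inl rfl
  · exact Or.inr rfl

lemma supp_eq_iff {x y : colIdx t → ZMod 2} : supp x = supp y → x = y := by
  intro h
  funext c
  have hx := zmod2_cases (x c); have hy := zmod2_cases (y c)
  have h1 : x c ≠ 0 → y c ≠ 0 := fun hc => mem_supp.1 (h ▸ (mem_supp.2 hc))
  have h2 : y c ≠ 0 → x c ≠ 0 := fun hc => mem_supp.1 (h ▸ (mem_supp.2 hc))
  rcases hx with hx | hx <;> rcases hy with hy | hy <;> simp_all

lemma ker_iff {x : colIdx t → ZMod 2} : Hb t *ᵥ x = 0 ↔ ∀ r, Even (deg x r) := by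
  constructor
  · intro h r
    have hr : (Hb t *ᵥ x) r = 0 := by rw [h]; rfl
    rw [mulVec, dotProduct] at hr
    have : ∑ c : colIdx t, Hb t r c * x c
        = ∑ c ∈ (supp x).filter (fun c => r = c.1.1 ∨ r = c.1.2), 1 := by
      rw [Finset.sum_filter]
      rw [show (supp x) = univ.filter (fun c => x c ≠ 0) from rfl, Finset.sum_filter]
      apply Finset.sum_congr rfl
      intro c _
      rcases zmod2_cases (x c) with hc | hc <;> simp [Hb, hc]
    rw [this] at hr
    simp only [Finset.sum_const, nsmul_eq_mul, mul_one] at hr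
    have := (ZMod.natCast_eq_zero_iff _ 2).1 hr
    exact even_iff_two_dvd.2 this
  · intro h
    funext r
    have hr := h r
    rw [mulVec, dotProduct]
    have : ∑ c : colIdx t, Hb t r c * x c
        = ∑ c ∈ (supp x).filter (fun c => r = c.1.1 ∨ r = c.1.2), 1 := by
      rw [Finset.sum_filter]
      rw [show (supp x) = univ.filter (fun c => x c ≠ 0) from rfl, Finset.sum_filter]
      apply Finset.sum_congr rfl
      intro c _
      rcases zmod2_cases (x c) with hc | hc <;> simp [Hb, hc]
    rw [this]
    simp only [Finset.sum_const, nsmul_eq_mul, mul_one, Pi.zero_apply]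
    rw [ZMod.natCast_eq_zero_iff]
    exact hr.two_dvd

/-- an edge is determined by its unordered pair of endpoints -/
lemma edge_ext {c d : colIdx t}
    (h : (c.1.1 = d.1.1 ∧ c.1.2 = d.1.2) ∨ (c.1.1 = d.1.2 ∧ c.1.2 = d.1.1)) : c = d := by
  have hc := c.2.1; have hd := d.2.1
  rcases h with ⟨h1, h2⟩ | ⟨h1, h2⟩
  · exact Subtype.ext (Prod.ext h1 h2)
  · exfalso; rw [h1, h2] at hc; exact absurd (hc.trans hd) (lt_irrefl _)

/-- endpoints of an edge have opposite parity -/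
lemma edge_parity (c : colIdx t) : c.1.1.val % 2 ≠ c.1.2.val % 2 := by
  have h1 := c.2.1
  have h2 := c.2.2
  rw [Nat.odd_iff] at h2
  have : c.1.1.val < c.1.2.val := h1
  omega

structure Cyc (t : ℕ) (x : colIdx t → ZMod 2) (l : ℕ) where
  u : ZMod l → Fin (4*t)
  ed : ZMod l → colIdx t
  hinj : Function.Injective u
  hl : 3 ≤ l
  hsupp : ∀ i, x (ed i) ≠ 0
  hend : ∀ i, ((ed i).1.1 = u i ∧ (ed i).1.2 = u (i+1)) ∨
      ((ed i).1.1 = u (i+1) ∧ (ed i).1.2 = u i)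

variable {x : colIdx t → ZMod 2} {l : ℕ}

lemma two_ne_zero_zmod (hl : 3 ≤ l) : (2 : ZMod l) ≠ 0 := by
  haveI : NeZero l := ⟨by omega⟩
  intro h
  have h1 : ((2 : ℕ) : ZMod l) = 0 := by exact_mod_cast h
  have h2 := congrArg ZMod.val h1
  rw [ZMod.val_natCast, ZMod.val_zero, Nat.mod_eq_of_lt (by omega)] at h2
  omega

lemma one_ne_zero_zmod (hl : 3 ≤ l) : (1 : ZMod l) ≠ 0 := by
  haveI : NeZero l := ⟨by omega⟩
  intro h
  have h1 : ((1 : ℕ) : ZMod l) = 0 := by exact_mod_cast h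
  have h2 := congrArg ZMod.val h1
  rw [ZMod.val_natCast, ZMod.val_zero, Nat.mod_eq_of_lt (by omega)] at h2
  omega

lemma Cyc.ed_inj (c : Cyc t x l) : Function.Injective c.ed := by
  intro i j hij
  have two0 : ∀ j : ZMod l, j + 1 + 1 = j → False := by
    intro j h
    have h2 : (2 : ZMod l) = 0 := by
      have := congrArg (fun z => z - j) h
      calc (2 : ZMod l) = j + 1 + 1 - j := by ring
        _ = j - j := this
        _ = 0 := by ring
    exact two_ne_zero_zmod c.hl h2
  rcases c.hend i with ⟨hi1, hi2⟩ | ⟨hi1, hi2⟩ <;>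
    rcases c.hend j with ⟨hj1, hj2⟩ | ⟨hj1, hj2⟩ <;>
    rw [hij] at hi1 hi2
  · exact c.hinj (hj1.symm.trans hi1) |>.symm ▸ rfl
  · exfalso
    have e1 : j + 1 = i := c.hinj (hj1.symm.trans hi1)
    have e2 : j = i + 1 := c.hinj (hj2.symm.trans hi2)
    exact two0 i (by rw [← e2, e1])
  · exfalso
    have e1 : j = i + 1 := c.hinj (hj1.symm.trans hi1)
    have e2 : j + 1 = i := c.hinj (hj2.symm.trans hi2)
    exact two0 i (by rw [← e1]; exact e2)
  · exact c.hinj (hj2.symm.trans hi2) |>.symm ▸ rfl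

/-- indicator vector of the edges of a cycle -/
def cvec [NeZero l] (c : Cyc t x l) : colIdx t → ZMod 2 :=
  fun e => if e ∈ Finset.image c.ed Finset.univ then 1 else 0

variable [NeZero l]

lemma supp_cvec (c : Cyc t x l) : supp (cvec c) = Finset.image c.ed Finset.univ := by
  ext e
  rw [mem_supp, cvec]
  split <;> simp_all

lemma supp_cvec_subset (c : Cyc t x l) : supp (cvec c) ⊆ supp x := by
  rw [supp_cvec]
  intro e he
  obtain ⟨i, _, rfl⟩ := Finset.mem_image.1 he
  exact mem_supp.2 (c.hsupp i)

lemma wt_cvec (c : Cyc t x l) : wt (cvec c) = l := by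
  rw [wt_eq_card_supp, supp_cvec, Finset.card_image_of_injective _ c.ed_inj,
    Finset.card_univ, ZMod.card]

lemma cvec_ne_zero (c : Cyc t x l) : cvec c ≠ 0 := by
  intro h
  have h0 : wt (cvec c) = 0 := by rw [h]; simp [wt]
  rw [wt_cvec] at h0
  have := c.hl; omega

lemma l_le_4t (c : Cyc t x l) : l ≤ 4 * t := by
  have := Fintype.card_le_of_injective c.u c.hinj
  rwa [ZMod.card, Fintype.card_fin] at this

omit [NeZero l] in
lemma Cyc.inc_iff (c : Cyc t x l) (r : Fin (4*t)) (i : ZMod l) :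
    (r = (c.ed i).1.1 ∨ r = (c.ed i).1.2) ↔ (c.u i = r ∨ c.u (i+1) = r) := by
  rcases c.hend i with ⟨h1, h2⟩ | ⟨h1, h2⟩ <;> rw [h1, h2] <;>
    constructor <;> rintro (rfl | rfl) <;> simp

lemma deg_cvec_even (c : Cyc t x l) (r : Fin (4*t)) : Even (deg (cvec c) r) := by
  have himg : (supp (cvec c)).filter (fun e => r = e.1.1 ∨ r = e.1.2)
      = Finset.image c.ed (Finset.univ.filter (fun i => c.u i = r ∨ c.u (i+1) = r)) := by
    rw [supp_cvec]
    ext e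
    simp only [Finset.mem_filter, Finset.mem_image, Finset.mem_univ, true_and]
    constructor
    · rintro ⟨⟨i, rfl⟩, h⟩
      exact ⟨i, (c.inc_iff r i).1 h, rfl⟩
    · rintro ⟨i, hi, rfl⟩
      exact ⟨⟨i, rfl⟩, (c.inc_iff r i).2 hi⟩
  rw [deg, himg, Finset.card_image_of_injective _ c.ed_inj]
  by_cases h : ∃ j, c.u j = r
  · obtain ⟨j, hj⟩ := h
    have hset : Finset.univ.filter (fun i => c.u i = r ∨ c.u (i+1) = r) = {j, j - 1} := by
      ext i
      simp only [Finset.mem_filter, Finset.mem_univ, true_and, Finset.mem_insert,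
        Finset.mem_singleton]
      constructor
      · rintro (h | h)
        · exact Or.inl (c.hinj (h.trans hj.symm))
        · exact Or.inr (eq_sub_of_add_eq (c.hinj (h.trans hj.symm)))
      · rintro (rfl | rfl)
        · exact Or.inl hj
        · refine Or.inr ?_
          rw [sub_add_cancel]
          exact hj
    rw [hset]
    have hne : j ≠ j - 1 := by
      intro hh
      have h1 : j - 1 = j := hh.symm
      rw [sub_eq_self] at h1
      exact one_ne_zero_zmod c.hl h1
    rw [Finset.card_insert_of_notMem (by simpa using hne), Finset.card_singleton]
    norm_num
  · have hset : Finset.univ.filter (fun i => c.u i = r ∨ c.u (i+1) = r) = ∅ := by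
      ext i
      simp only [Finset.mem_filter, Finset.mem_univ, true_and, Finset.notMem_empty,
        iff_false]
      rintro (hh | hh) <;> exact h ⟨_, hh⟩
    rw [hset]
    simp

lemma ker_cvec (c : Cyc t x l) : Hb t *ᵥ cvec c = 0 :=
  ker_iff.2 (deg_cvec_even c)


def adjx (x : colIdx t → ZMod 2) (u v : Fin (4*t)) : Prop :=
  ∃ e : colIdx t, x e ≠ 0 ∧ ((e.1.1 = u ∧ e.1.2 = v) ∨ (e.1.1 = v ∧ e.1.2 = u))

lemma adjx_symm {u v : Fin (4*t)} (h : adjx x u v) : adjx x v u := by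
  obtain ⟨e, he, h⟩ := h
  exact ⟨e, he, h.symm⟩

lemma get_eq_of_val {C : List (Fin (4*t))} (i k : Fin C.length) (h : i.val = k.val) :
    C.get i = C.get k := by congr 1; exact Fin.ext h

lemma cyc_of_list (x : colIdx t → ZMod 2) (C : List (Fin (4*t))) (h3 : 3 ≤ C.length)
    (hnd : C.Nodup) (hch : C.Chain' (adjx x))
    (hcl : adjx x (C.get ⟨C.length - 1, by omega⟩) (C.get ⟨0, by omega⟩)) :
    Nonempty (Cyc t x C.length) := by
  haveI : NeZero C.length := ⟨by omega⟩
  haveI : Fact (1 < C.length) := ⟨by omega⟩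
  set l := C.length with hl
  let u : ZMod l → Fin (4*t) := fun j => C.get ⟨j.val, ZMod.val_lt j⟩
  have hadj : ∀ j : ZMod l, adjx x (u j) (u (j+1)) := by
    intro j
    have hv : (j + 1).val = (j.val + 1) % l := by rw [ZMod.val_add, ZMod.val_one]
    by_cases hj : j.val + 1 < l
    · have hv1 : (j+1).val = j.val + 1 := by rw [hv, Nat.mod_eq_of_lt hj]
      have hc := List.isChain_iff_getElem.1 hch j.val (by omega)
      have e1 : u j = C.get ⟨j.val, by omega⟩ := get_eq_of_val _ _ rfl
      have e2 : u (j+1) = C.get ⟨j.val + 1, by omega⟩ := get_eq_of_val _ _ hv1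
      rw [e1, e2]
      exact hc
    · have hj1 : j.val + 1 = l := by have := ZMod.val_lt j; omega
      have h0 : (j+1).val = 0 := by rw [hv, hj1, Nat.mod_self]
      have e1 : u j = C.get ⟨l - 1, by omega⟩ := get_eq_of_val _ _ (show j.val = l - 1 by omega)
      have e2 : u (j+1) = C.get ⟨0, by omega⟩ := get_eq_of_val _ _ h0
      rw [e1, e2]
      exact hcl
  have hinj : Function.Injective u := by
    intro a b hab
    have h1 := (hnd.get_inj_iff).1 hab
    have h2 : a.val = b.val := congrArg Fin.val h1
    exact ZMod.val_injective l h2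
  exact ⟨⟨u, fun j => (hadj j).choose, hinj, h3,
    fun j => ((hadj j).choose_spec).1, fun j => ((hadj j).choose_spec).2⟩⟩

lemma edge_eq_of_same_ends {e f : colIdx t} {v w : Fin (4*t)}
    (he : (e.1.1 = v ∧ e.1.2 = w) ∨ (e.1.1 = w ∧ e.1.2 = v))
    (hf : (f.1.1 = v ∧ f.1.2 = w) ∨ (f.1.1 = w ∧ f.1.2 = v)) : e = f := by
  apply edge_ext
  rcases he with ⟨h1, h2⟩ | ⟨h1, h2⟩ <;> rcases hf with ⟨h3, h4⟩ | ⟨h3, h4⟩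
  · exact Or.inl ⟨h1.trans h3.symm, h2.trans h4.symm⟩
  · exact Or.inr ⟨h1.trans h4.symm, h2.trans h3.symm⟩
  · exact Or.inr ⟨h1.trans h4.symm, h2.trans h3.symm⟩
  · exact Or.inl ⟨h1.trans h3.symm, h2.trans h4.symm⟩

lemma step_lemma (x : colIdx t → ZMod 2) (hker : Hb t *ᵥ x = 0)
    (v p : Fin (4*t)) (rest : List (Fin (4*t)))
    (hnd : (v :: p :: rest).Nodup) (hch : (v :: p :: rest).Chain' (adjx x)) :
    (∃ l, Nonempty (Cyc t x l)) ∨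
    (∃ w, w ∉ (v :: p :: rest) ∧ (w :: v :: p :: rest).Nodup ∧
      (w :: v :: p :: rest).Chain' (adjx x)) := by
  set L := v :: p :: rest with hL
  have hvp : adjx x v p := (List.isChain_cons_cons.1 hch).1
  obtain ⟨e, he0, hee⟩ := hvp
  have hes : e ∈ (supp x).filter (fun c => v = c.1.1 ∨ v = c.1.2) := by
    rw [Finset.mem_filter]
    refine ⟨mem_supp.2 he0, ?_⟩
    rcases hee with ⟨h1, _⟩ | ⟨_, h2⟩
    · exact Or.inl h1.symm
    · exact Or.inr h2.symm
  have heven : Even (((supp x).filter (fun c => v = c.1.1 ∨ v = c.1.2)).card) :=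
    ker_iff.1 hker v
  have hlt : 1 < ((supp x).filter (fun c => v = c.1.1 ∨ v = c.1.2)).card := by
    have hpos : 0 < ((supp x).filter (fun c => v = c.1.1 ∨ v = c.1.2)).card :=
      Finset.card_pos.2 ⟨e, hes⟩
    rcases heven with ⟨k, hk⟩
    omega
  obtain ⟨f, hf, hfe⟩ := Finset.exists_mem_ne hlt e
  rw [Finset.mem_filter] at hf
  obtain ⟨hf0, hfv⟩ := hf
  -- w : the other endpoint of f
  obtain ⟨w, hfw⟩ : ∃ w, (f.1.1 = v ∧ f.1.2 = w) ∨ (f.1.1 = w ∧ f.1.2 = v) := by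
    rcases hfv with h | h
    · exact ⟨f.1.2, Or.inl ⟨h.symm, rfl⟩⟩
    · exact ⟨f.1.1, Or.inr ⟨rfl, h.symm⟩⟩
  have hwv : w ≠ v := by
    intro h
    subst h
    have := f.2.1
    rcases hfw with ⟨h1, h2⟩ | ⟨h1, h2⟩ <;> rw [h1, h2] at this <;> exact lt_irrefl _ this
  have hwp : w ≠ p := by
    intro h
    subst h
    have hef : f = e := edge_eq_of_same_ends hfw (by
      rcases hee with ⟨h1, h2⟩ | ⟨h1, h2⟩
      · exact Or.inl ⟨h1, h2⟩
      · exact Or.inr ⟨h1, h2⟩)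
    exact hfe hef
  have hadjvw : adjx x v w := ⟨f, mem_supp.1 hf0, hfw⟩
  by_cases hw : w ∈ L
  · left
    obtain ⟨⟨i, hi⟩, hgi⟩ := List.mem_iff_get.1 hw
    have hg0 : L.get ⟨0, by simp [hL]⟩ = v := rfl
    have hg1 : L.get ⟨1, by simp [hL]⟩ = p := rfl
    have h2i : 2 ≤ i := by
      by_contra hcon
      interval_cases i
      · exact hwv (hgi.symm.trans rfl)
      · exact hwp (hgi.symm.trans rfl)
    set C := L.take (i + 1) with hC
    have hClen : C.length = i + 1 := by
      rw [hC, List.length_take]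
      omega
    have hCnd : C.Nodup := hnd.sublist (List.take_sublist _ _)
    have hCch : C.Chain' (adjx x) := hch.take _
    have hClast : C.get ⟨C.length - 1, by omega⟩ = w := by
      have : C.get ⟨i, by omega⟩ = L.get ⟨i, hi⟩ := (List.getElem_take' hi (by omega)).symm
      rw [← hgi, ← this]
      exact get_eq_of_val _ _ (show C.length - 1 = i by omega)
    have hC0 : C.get ⟨0, by omega⟩ = v := by
      have : C.get ⟨0, by omega⟩ = L.get ⟨0, by simp [hL]⟩ := (List.getElem_take' _ (by omega)).symm
      rw [this, hg0]
    refine ⟨C.length, cyc_of_list x C (by omega) hCnd hCch ?_⟩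
    rw [hClast, hC0]
    exact adjx_symm hadjvw
  · right
    refine ⟨w, hw, ?_, ?_⟩
    · rw [List.nodup_cons]
      exact ⟨hw, hnd⟩
    · apply List.isChain_cons_cons.2
      exact ⟨adjx_symm hadjvw, hch⟩

lemma grow (x : colIdx t → ZMod 2) (hker : Hb t *ᵥ x = 0) :
    ∀ (n : ℕ) (v p : Fin (4*t)) (rest : List (Fin (4*t))),
      (v :: p :: rest).Nodup → (v :: p :: rest).Chain' (adjx x) →
      4*t ≤ (v :: p :: rest).length + n → ∃ l, Nonempty (Cyc t x l) := by
  intro n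
  induction n with
  | zero =>
    intro v p rest hnd hch hlen
    rcases step_lemma x hker v p rest hnd hch with h | ⟨w, hw, hnd', _⟩
    · exact h
    · exfalso
      have := hnd'.length_le_card
      rw [Fintype.card_fin] at this
      simp only [List.length_cons] at this hlen
      omega
  | succ n ih =>
    intro v p rest hnd hch hlen
    rcases step_lemma x hker v p rest hnd hch with h | ⟨w, _, hnd', hch'⟩
    · exact h
    · exact ih w v (p :: rest) hnd' hch' (by simp only [List.length_cons] at hlen ⊢; omega)

lemma exists_cyc (x : colIdx t → ZMod 2) (hker : Hb t *ᵥ x = 0) (hx : x ≠ 0) :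
    ∃ l, Nonempty (Cyc t x l) := by
  obtain ⟨e, he⟩ : ∃ e, x e ≠ 0 := by
    by_contra hcon
    push_neg at hcon
    exact hx (funext hcon)
  have hne : e.1.1 ≠ e.1.2 := ne_of_lt e.2.1
  apply grow x hker (4*t) e.1.1 e.1.2 []
  · simp [hne]
  · apply List.isChain_cons_cons.2
    exact ⟨⟨e, he, Or.inl ⟨rfl, rfl⟩⟩, List.isChain_singleton _⟩
  · simp

lemma add_self_zero (y : colIdx t → ZMod 2) : y + y = 0 := by
  funext c
  show y c + y c = 0
  rcases zmod2_cases (y c) with h | h <;> rw [h] <;> decide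

lemma cyc_or_split (x : colIdx t → ZMod 2) (hker : Hb t *ᵥ x = 0) (hx : x ≠ 0) :
    (∃ l, ∃ c : Cyc t x (l+1), x = cvec c) ∨
    (∃ a b : colIdx t → ZMod 2, Hb t *ᵥ a = 0 ∧ Hb t *ᵥ b = 0 ∧ a ≠ 0 ∧ b ≠ 0 ∧
      (∀ c, a c = 0 ∨ b c = 0) ∧ x = a + b) := by
  obtain ⟨l, ⟨c⟩⟩ := exists_cyc x hker hx
  obtain ⟨l', rfl⟩ : ∃ l', l = l' + 1 := ⟨l - 1, by have := c.hl; omega⟩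
  by_cases hxc : x = cvec c
  · exact Or.inl ⟨l', c, hxc⟩
  · right
    refine ⟨cvec c, x + cvec c, ker_cvec c, ?_, cvec_ne_zero c, ?_, ?_, ?_⟩
    · rw [Matrix.mulVec_add, hker, ker_cvec c, add_zero]
    · intro h
      apply hxc
      have h2 := congrArg (· + cvec c) h
      simp only [zero_add] at h2
      rw [add_assoc, add_self_zero, add_zero] at h2
      exact h2
    · intro e
      by_cases he : e ∈ Finset.image c.ed Finset.univ
      · right
        have h1 : cvec c e = 1 := by rw [cvec]; simp [he]
        have h2 : x e = 1 := by
          have hs : e ∈ supp x := supp_cvec_subset c (by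
            rw [supp_cvec]; exact he)
          rcases zmod2_cases (x e) with hh | hh
          · exact absurd hh (mem_supp.1 hs)
          · exact hh
        show x e + cvec c e = 0
        rw [h1, h2]
        decide
      · left
        show cvec c e = 0
        rw [cvec]
        simp [he]
    · have hh : cvec c + (x + cvec c) = x := by
        rw [add_comm x (cvec c), ← add_assoc, add_self_zero, zero_add]
      exact hh.symm

lemma irred_cvec {x : colIdx t → ZMod 2} (h : Irred t x) :
    ∃ l, ∃ c : Cyc t x (l+1), x = cvec c := by
  obtain ⟨hker, hx, hns⟩ := h
  rcases cyc_or_split x hker hx with h | h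
  · exact h
  · exact absurd h hns

lemma alt_parity {l : ℕ} [NeZero l] (s : ZMod l → Fin (4*t))
    (hflip : ∀ i, (s i).val % 2 ≠ (s (i+1)).val % 2) (n : ℕ) :
    (s ((n : ℕ) : ZMod l)).val % 2 = ((s 0).val % 2 + n) % 2 := by
  induction n with
  | zero => simp
  | succ n ih =>
    have h := hflip ((n : ℕ) : ZMod l)
    have hc : (((n+1 : ℕ) : ℕ) : ZMod l) = ((n : ℕ) : ZMod l) + 1 := by push_cast; ring
    rw [hc]
    omega

lemma Cyc.flip {x : colIdx t → ZMod 2} {l : ℕ} (c : Cyc t x l) (i : ZMod l) :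
    (c.u i).val % 2 ≠ (c.u (i+1)).val % 2 := by
  have h := edge_parity (c.ed i)
  rcases c.hend i with ⟨h1, h2⟩ | ⟨h1, h2⟩ <;> rw [h1, h2] at h
  · exact h
  · exact h.symm

lemma Cyc.even_l {x : colIdx t → ZMod 2} {l : ℕ} [NeZero l] (c : Cyc t x l) :
    l % 2 = 0 := by
  have h := alt_parity c.u c.flip l
  rw [ZMod.natCast_self] at h
  omega

lemma irred_facts {x : colIdx t → ZMod 2} (h : Irred t x) :
    Even (wt x) ∧ 4 ≤ wt x ∧ wt x ≤ 4 * t := by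
  obtain ⟨l, c, hx⟩ := irred_cvec h
  have hwt : wt x = l + 1 := by rw [hx, wt_cvec]
  have h3 := c.hl
  have hev : (l+1) % 2 = 0 := c.even_l
  have hle := l_le_4t c
  exact ⟨by rw [hwt]; exact Nat.even_iff.2 hev, by omega, by omega⟩

lemma eq_zero_of_wt_eq_zero {x : colIdx t → ZMod 2} (h : wt x = 0) : x = 0 := by
  funext c
  by_contra hc
  have : c ∈ supp x := mem_supp.2 hc
  rw [wt_eq_card_supp, Finset.card_eq_zero] at h
  rw [h] at this
  exact absurd this (Finset.notMem_empty c)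

lemma wt_zero : wt (0 : colIdx t → ZMod 2) = 0 := by simp [wt]

lemma supp_add_eq {a b : colIdx t → ZMod 2} (hdisj : ∀ c, a c = 0 ∨ b c = 0) :
    supp (a + b) = supp a ∪ supp b := by
  ext c
  rw [mem_supp, Finset.mem_union, mem_supp, mem_supp]
  show a c + b c ≠ 0 ↔ _
  rcases hdisj c with h | h <;> rw [h] <;> simp

lemma supp_disjoint {a b : colIdx t → ZMod 2} (hdisj : ∀ c, a c = 0 ∨ b c = 0) :
    Disjoint (supp a) (supp b) := by
  rw [Finset.disjoint_left]
  intro c hc hcb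
  rcases hdisj c with h | h
  · exact mem_supp.1 hc h
  · exact mem_supp.1 hcb h

lemma exists_decomp {x : colIdx t → ZMod 2} (hker : Hb t *ᵥ x = 0) :
    ∃ D : Finset (colIdx t → ZMod 2),
      (∀ y ∈ D, Irred t y) ∧
      (∑ y ∈ D, y) = x ∧ (∑ y ∈ D, wt y) = wt x ∧
      (∀ y ∈ D, supp y ⊆ supp x) := by
  suffices H : ∀ (n : ℕ) (x : colIdx t → ZMod 2), Hb t *ᵥ x = 0 → wt x ≤ n →
      ∃ D : Finset (colIdx t → ZMod 2),
        (∀ y ∈ D, Irred t y) ∧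
        (∑ y ∈ D, y) = x ∧ (∑ y ∈ D, wt y) = wt x ∧
        (∀ y ∈ D, supp y ⊆ supp x) by
    exact H (wt x) x hker le_rfl
  intro n
  induction n with
  | zero =>
    intro x hker hwt
    have hx0 : x = 0 := eq_zero_of_wt_eq_zero (by omega)
    subst hx0
    exact ⟨∅, by simp, by simp, by simp [wt_zero], by simp⟩
  | succ n ih =>
    intro x hker hwt
    by_cases hx0 : x = 0
    · subst hx0
      exact ⟨∅, by simp, by simp, by simp [wt_zero], by simp⟩
    by_cases hirr : Irred t x
    · refine ⟨{x}, ?_, by simp, by simp, by simp⟩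
      intro y hy
      rw [Finset.mem_singleton] at hy
      subst hy
      exact hirr
    · have hsplit : ∃ a b : colIdx t → ZMod 2, Hb t *ᵥ a = 0 ∧ Hb t *ᵥ b = 0 ∧
          a ≠ 0 ∧ b ≠ 0 ∧ (∀ c, a c = 0 ∨ b c = 0) ∧ x = a + b := by
        by_contra hne
        exact hirr ⟨hker, hx0, hne⟩
      obtain ⟨a, b, hka, hkb, ha0, hb0, hdisj, hxab⟩ := hsplit
      subst hxab
      have hsupp := supp_add_eq hdisj
      have hd := supp_disjoint hdisj
      have hwab : wt (a + b) = wt a + wt b := by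
        rw [wt_eq_card_supp, hsupp, Finset.card_union_of_disjoint hd,
          ← wt_eq_card_supp, ← wt_eq_card_supp]
      have hwa : 1 ≤ wt a := by
        obtain ⟨c, hc⟩ : ∃ c, a c ≠ 0 := by
          by_contra hcon; push_neg at hcon; exact ha0 (funext hcon)
        rw [wt_eq_card_supp]
        exact Finset.card_pos.2 ⟨c, mem_supp.2 hc⟩
      have hwb : 1 ≤ wt b := by
        obtain ⟨c, hc⟩ : ∃ c, b c ≠ 0 := by
          by_contra hcon; push_neg at hcon; exact hb0 (funext hcon)
        rw [wt_eq_card_supp]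
        exact Finset.card_pos.2 ⟨c, mem_supp.2 hc⟩
      obtain ⟨Da, hIa, hSa, hWa, hsa⟩ := ih a hka (by omega)
      obtain ⟨Db, hIb, hSb, hWb, hsb⟩ := ih b hkb (by omega)
      have hDd : Disjoint Da Db := by
        rw [Finset.disjoint_left]
        intro y hya hyb
        have hy0 : y = 0 := by
          funext c
          by_contra hc
          have h1 := hsa y hya (mem_supp.2 hc)
          have h2 := hsb y hyb (mem_supp.2 hc)
          exact (Finset.disjoint_left.1 hd h1) h2
        exact (hIa y hya).2.1 hy0
      refine ⟨Da ∪ Db, ?_, ?_, ?_, ?_⟩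
      · intro y hy
        rcases Finset.mem_union.1 hy with h | h
        · exact hIa y h
        · exact hIb y h
      · rw [Finset.sum_union hDd, hSa, hSb]
      · rw [Finset.sum_union hDd, hWa, hWb, hwab]
      · intro y hy
        rcases Finset.mem_union.1 hy with h | h
        · exact (hsa y h).trans (hsupp ▸ Finset.subset_union_left)
        · exact (hsb y h).trans (hsupp ▸ Finset.subset_union_right)


open Classical in
noncomputable def IrrF (t m : ℕ) : Finset (colIdx t → ZMod 2) :=
  Finset.univ.filter (fun y => Irred t y ∧ wt y = m)

open Classical in
lemma mem_IrrF {m : ℕ} {y : colIdx t → ZMod 2} :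
    y ∈ IrrF t m ↔ (Irred t y ∧ wt y = m) := by
  unfold IrrF
  rw [Finset.mem_filter]
  exact ⟨fun h => h.2, fun h => ⟨Finset.mem_univ _, h⟩⟩

def Ev (t : ℕ) := {v : Fin (4*t) // v.val % 2 = 0}
def Od (t : ℕ) := {v : Fin (4*t) // v.val % 2 = 1}

instance : Fintype (Ev t) := by unfold Ev; infer_instance
instance : Fintype (Od t) := by unfold Od; infer_instance
instance : DecidableEq (Ev t) := by unfold Ev; infer_instance
instance : DecidableEq (Od t) := by unfold Od; infer_instance

lemma card_Ev : Fintype.card (Ev t) = 2*t := by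
  have e : Ev t ≃ Fin (2*t) :=
    ⟨fun v => ⟨v.1.val / 2, by have h1 := v.1.isLt; have h2 := v.2; omega⟩,
     fun i => ⟨⟨2*i.val, by have := i.isLt; omega⟩,
       by show (2*i.val) % 2 = 0; omega⟩,
     fun v => Subtype.ext (Fin.ext (by
       have h2 := v.2
       show 2 * (v.1.val / 2) = v.1.val
       omega)),
     fun i => Fin.ext (by show (2*i.val) / 2 = i.val; omega)⟩
  rw [Fintype.card_congr e, Fintype.card_fin]

lemma card_Od : Fintype.card (Od t) = 2*t := by
  have e : Od t ≃ Fin (2*t) :=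
    ⟨fun v => ⟨v.1.val / 2, by have h1 := v.1.isLt; have h2 := v.2; omega⟩,
     fun i => ⟨⟨2*i.val+1, by have := i.isLt; omega⟩,
       by show (2*i.val+1) % 2 = 1; omega⟩,
     fun v => Subtype.ext (Fin.ext (by
       have h2 := v.2
       show 2 * (v.1.val / 2) + 1 = v.1.val
       omega)),
     fun i => Fin.ext (by show (2*i.val+1) / 2 = i.val; omega)⟩
  rw [Fintype.card_congr e, Fintype.card_fin]

lemma irred_cvec_wt {y : colIdx t → ZMod 2} {m : ℕ} [NeZero m]
    (h : Irred t y) (hm : wt y = m) : ∃ c : Cyc t y m, y = cvec c := by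
  obtain ⟨l, c, hc⟩ := irred_cvec h
  have hlm : l + 1 = m := by rw [← hm, hc, wt_cvec]
  subst hlm
  exact ⟨c, hc⟩

section SFun

variable {x : colIdx t → ZMod 2} {m : ℕ}

/-- the traversal sequence of a cycle, starting at position `j`, direction `d` -/
def sfun (c : Cyc t x m) (j : ZMod m) (d : Bool) : ZMod m → Fin (4*t) :=
  fun r => if d then c.u (j + r) else c.u (j - r)

lemma sfun_inj (c : Cyc t x m) (j : ZMod m) (d : Bool) :
    Function.Injective (sfun c j d) := by
  intro a b hab
  unfold sfun at hab
  cases d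
  · simp only [Bool.false_eq_true, if_false] at hab
    have h := c.hinj hab
    have h2 : j - (j - a) = j - (j - b) := by rw [h]
    simpa [sub_sub_cancel] using h2
  · simp only [if_true] at hab
    exact add_left_cancel (c.hinj hab)

lemma sfun_flip (c : Cyc t x m) (j : ZMod m) (d : Bool) (r : ZMod m) :
    ((sfun c j d r).val % 2 ≠ (sfun c j d (r+1)).val % 2) := by
  unfold sfun
  cases d
  · simp only [Bool.false_eq_true, if_false]
    have h := c.flip (j - r - 1)
    have e1 : j - r - 1 + 1 = j - r := by ring
    have e2 : j - (r + 1) = j - r - 1 := by ring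
    rw [e1] at h
    rw [e2]
    exact h.symm
  · simp only [if_true]
    have h := c.flip (j + r)
    have e1 : j + (r + 1) = j + r + 1 := by ring
    rw [e1]
    exact h



lemma sfun_zero (c : Cyc t x m) (j : ZMod m) (d : Bool) : sfun c j d 0 = c.u j := by
  cases d <;> simp [sfun]

lemma supp_sfun_eq [NeZero m] (c : Cyc t x m) (hx : x = cvec c) (j : ZMod m) (d : Bool) :
    supp x = Finset.univ.filter (fun e : colIdx t =>
      ∃ r : ZMod m, ((e.1.1 = sfun c j d r ∧ e.1.2 = sfun c j d (r+1)) ∨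
        (e.1.1 = sfun c j d (r+1) ∧ e.1.2 = sfun c j d r))) := by
  conv_lhs => rw [hx, supp_cvec]
  ext e
  simp only [Finset.mem_image, Finset.mem_univ, true_and, Finset.mem_filter]
  constructor
  · rintro ⟨i, rfl⟩
    cases d
    · refine ⟨j - i - 1, ?_⟩
      have e1 : sfun c j false (j - i - 1) = c.u (i + 1) := by
        simp only [sfun, Bool.false_eq_true, if_false]
        congr 1
        ring
      have e2 : sfun c j false (j - i - 1 + 1) = c.u i := by
        simp only [sfun, Bool.false_eq_true, if_false]
        congr 1
        ring
      rw [e1, e2]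
      rcases c.hend i with ⟨h1, h2⟩ | ⟨h1, h2⟩
      · exact Or.inr ⟨h1, h2⟩
      · exact Or.inl ⟨h1, h2⟩
    · refine ⟨i - j, ?_⟩
      have e1 : sfun c j true (i - j) = c.u i := by
        simp only [sfun, if_true]
        congr 1
        ring
      have e2 : sfun c j true (i - j + 1) = c.u (i + 1) := by
        simp only [sfun, if_true]
        congr 1
        ring
      rw [e1, e2]
      rcases c.hend i with ⟨h1, h2⟩ | ⟨h1, h2⟩
      · exact Or.inl ⟨h1, h2⟩
      · exact Or.inr ⟨h1, h2⟩
  · rintro ⟨r, hr⟩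
    cases d
    · have e1 : sfun c j false r = c.u ((j - r - 1) + 1) := by
        simp only [sfun, Bool.false_eq_true, if_false]
        congr 1
        ring
      have e2 : sfun c j false (r + 1) = c.u (j - r - 1) := by
        simp only [sfun, Bool.false_eq_true, if_false]
        congr 1
        ring
      rw [e1, e2] at hr
      refine ⟨j - r - 1, ?_⟩
      refine (edge_eq_of_same_ends (v := c.u (j - r - 1)) (w := c.u (j - r - 1 + 1))
        ?_ (c.hend (j - r - 1))).symm
      tauto
    · have e1 : sfun c j true r = c.u (j + r) := by simp [sfun]
      have e2 : sfun c j true (r + 1) = c.u ((j + r) + 1) := by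
        simp only [sfun, if_true]
        congr 1
        ring
      rw [e1, e2] at hr
      refine ⟨j + r, ?_⟩
      refine (edge_eq_of_same_ends (v := c.u (j + r)) (w := c.u (j + r + 1))
        ?_ (c.hend (j + r))).symm
      tauto

variable [NeZero m]

def q0 (c : Cyc t x m) (j : ZMod m) (d : Bool) : ℕ := (sfun c j d 0).val % 2

lemma q0_lt (c : Cyc t x m) (j : ZMod m) (d : Bool) : q0 c j d < 2 :=
  Nat.mod_lt _ two_pos

lemma sfun_parity (c : Cyc t x m) (j : ZMod m) (d : Bool) (n : ℕ) :
    (sfun c j d ((n : ℕ) : ZMod m)).val % 2 = (q0 c j d + n) % 2 :=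
  alt_parity _ (sfun_flip c j d) n

def embE (hm2 : m % 2 = 0) (hm3 : 3 ≤ m) (c : Cyc t x m) (j : ZMod m) (d : Bool) :
    Fin (m/2) ↪ Ev t where
  toFun i := ⟨sfun c j d ((2*i.val + q0 c j d : ℕ) : ZMod m), by
    rw [sfun_parity]
    have := q0_lt c j d
    omega⟩
  inj' := by
    intro a b hab
    have h1 := congrArg Subtype.val hab
    have h2 := sfun_inj c j d h1
    have h3 := congrArg ZMod.val h2
    have ha := a.isLt; have hb := b.isLt
    have hq := q0_lt c j d
    rw [ZMod.val_cast_of_lt (by omega), ZMod.val_cast_of_lt (by omega)] at h3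
    exact Fin.ext (by omega)

def embO (hm2 : m % 2 = 0) (hm3 : 3 ≤ m) (c : Cyc t x m) (j : ZMod m) (d : Bool) :
    Fin (m/2) ↪ Od t where
  toFun i := ⟨sfun c j d ((2*i.val + (1 - q0 c j d) : ℕ) : ZMod m), by
    rw [sfun_parity]
    have := q0_lt c j d
    omega⟩
  inj' := by
    intro a b hab
    have h1 := congrArg Subtype.val hab
    have h2 := sfun_inj c j d h1
    have h3 := congrArg ZMod.val h2
    have ha := a.isLt; have hb := b.isLt
    have hq := q0_lt c j d
    rw [ZMod.val_cast_of_lt (by omega), ZMod.val_cast_of_lt (by omega)] at h3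
    exact Fin.ext (by omega)

lemma sfun_determined (hm2 : m % 2 = 0) (hm3 : 3 ≤ m) {x' : colIdx t → ZMod 2}
    (c : Cyc t x m) (c' : Cyc t x' m) (j j' : ZMod m) (d d' : Bool)
    (hE : ∀ i : Fin (m/2), ((embE hm2 hm3 c j d) i).1 = ((embE hm2 hm3 c' j' d') i).1)
    (hO : ∀ i : Fin (m/2), ((embO hm2 hm3 c j d) i).1 = ((embO hm2 hm3 c' j' d') i).1)
    (hq0 : q0 c j d = q0 c' j' d') :
    ∀ r : ZMod m, sfun c j d r = sfun c' j' d' r := by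
  intro r
  have hr := ZMod.val_lt r
  have hc : ((r.val : ℕ) : ZMod m) = r := ZMod.natCast_rightInverse r
  have hq := q0_lt c j d
  by_cases hp : (q0 c j d + r.val) % 2 = 0
  · have hik : (r.val - q0 c j d) / 2 < m/2 ∧
        2*((r.val - q0 c j d) / 2) + q0 c j d = r.val := by omega
    have h1 := hE ⟨(r.val - q0 c j d) / 2, hik.1⟩
    simp only [embE, Function.Embedding.coeFn_mk] at h1
    change sfun c j d (((2*((r.val - q0 c j d)/2) + q0 c j d : ℕ)) : ZMod m) = sfun c' j' d' (((2*((r.val - q0 c j d)/2) + q0 c' j' d' : ℕ)) : ZMod m) at h1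
    rw [hik.2] at h1
    rw [← hq0, hik.2] at h1
    rwa [hc] at h1
  · have hik : (r.val - (1 - q0 c j d)) / 2 < m/2 ∧
        2*((r.val - (1 - q0 c j d)) / 2) + (1 - q0 c j d) = r.val := by omega
    have h1 := hO ⟨(r.val - (1 - q0 c j d)) / 2, hik.1⟩
    simp only [embO, Function.Embedding.coeFn_mk] at h1
    change sfun c j d (((2*((r.val - (1 - q0 c j d))/2) + (1 - q0 c j d) : ℕ)) : ZMod m) = sfun c' j' d' (((2*((r.val - (1 - q0 c j d))/2) + (1 - q0 c' j' d') : ℕ)) : ZMod m) at h1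
    rw [hik.2] at h1
    rw [← hq0, hik.2] at h1
    rwa [hc] at h1

end SFun

set_option maxHeartbeats 1600000 in
lemma card_IrrF_le (t m : ℕ) :
    (IrrF t m).card ≤ (∏ i ∈ Finset.range (m/2), (2*t - i)^2) / m := by
  classical
  rcases Finset.eq_empty_or_nonempty (IrrF t m) with he | ⟨y0, hy0⟩
  · simp [he]
  have hy0' : Irred t y0 ∧ wt y0 = m := mem_IrrF.1 hy0
  obtain ⟨hev, h4, hle⟩ := irred_facts hy0'.1
  rw [hy0'.2] at hev h4 hle
  have hm2 : m % 2 = 0 := Nat.even_iff.1 hev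
  have hm3 : 3 ≤ m := by omega
  haveI : NeZero m := ⟨by omega⟩
  -- canonical cycle for each irreducible of weight m
  have hcy : ∀ p : ↥(IrrF t m), ∃ c : Cyc t (p : colIdx t → ZMod 2) m,
      (p : colIdx t → ZMod 2) = cvec c := by
    intro p
    have hp : Irred t (p : colIdx t → ZMod 2) ∧ wt (p : colIdx t → ZMod 2) = m :=
      mem_IrrF.1 p.2
    exact irred_cvec_wt hp.1 hp.2
  choose cy hcy_eq using hcy
  -- the injection
  set Φ : (↥(IrrF t m) × ZMod m × Bool) → ((Fin (m/2) ↪ Ev t) × (Fin (m/2) ↪ Od t) × Bool) :=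
    fun q => (embE hm2 hm3 (cy q.1) q.2.1 q.2.2, embO hm2 hm3 (cy q.1) q.2.1 q.2.2,
      decide (q0 (cy q.1) q.2.1 q.2.2 = 0)) with hΦ
  have hΦinj : Function.Injective Φ := by
    rintro ⟨p, j, d⟩ ⟨p', j', d'⟩ h
    rw [hΦ] at h
    simp only [Prod.mk.injEq] at h
    obtain ⟨hE, hO, hB⟩ := h
    have hq0 : q0 (cy p) j d = q0 (cy p') j' d' := by
      have h2 : (q0 (cy p) j d = 0) ↔ (q0 (cy p') j' d' = 0) := decide_eq_decide.mp hB
      have := q0_lt (cy p) j d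
      have := q0_lt (cy p') j' d'
      omega
    have hs : ∀ r : ZMod m, sfun (cy p) j d r = sfun (cy p') j' d' r := by
      apply sfun_determined hm2 hm3 _ _ _ _ _ _ _ _ hq0
      · intro i
        rw [hE]
      · intro i
        rw [hO]
    -- recover the codeword
    have hsupp : supp (p : colIdx t → ZMod 2) = supp (p' : colIdx t → ZMod 2) := by
      rw [supp_sfun_eq (cy p) (hcy_eq p) j d, supp_sfun_eq (cy p') (hcy_eq p') j' d']
      apply Finset.filter_congr
      intro e _
      simp only [funext hs]
    have hpp : p = p' := Subtype.ext (supp_eq_iff hsupp)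
    subst hpp
    -- recover j
    have hj : j = j' := by
      have h0 := hs 0
      rw [sfun_zero, sfun_zero] at h0
      exact (cy p).hinj h0
    subst hj
    -- recover d
    have hd : d = d' := by
      cases d <;> cases d' <;> try rfl
      all_goals {
        exfalso
        have h1 := hs 1
        simp only [sfun] at h1
        have h2 := (cy p).hinj h1
        have h3 : (2 : ZMod m) = 0 := by
          have := congrArg (fun z => z - (j - 1)) h2
          calc (2 : ZMod m) = (j + 1) - (j - 1) := by ring
            _ = (j - 1) - (j - 1) := by rw [h2]
            _ = 0 := by ring
        exact two_ne_zero_zmod hm3 h3 }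
    subst hd
    rfl
  have hcard := Fintype.card_le_of_injective Φ hΦinj
  simp only [Fintype.card_prod, Fintype.card_coe, ZMod.card, Fintype.card_bool,
    Fintype.card_embedding_eq, card_Ev, card_Od, Fintype.card_fin] at hcard
  rw [Nat.le_div_iff_mul_le (by omega : 0 < m)]
  have hprod : ∏ i ∈ Finset.range (m/2), (2*t - i)^2
      = ((2*t).descFactorial (m/2)) * ((2*t).descFactorial (m/2)) := by
    rw [Nat.descFactorial_eq_prod_range, ← Finset.prod_mul_distrib]
    apply Finset.prod_congr rfl
    intro i _
    ring
  rw [hprod]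
  set N := (IrrF t m).card
  set D := (2*t).descFactorial (m/2)
  have h2 : N * m * 2 ≤ D * D * 2 := by
    calc N * m * 2 = N * (m * 2) := by ring
      _ ≤ D * (D * 2) := hcard
      _ = D * D * 2 := by ring
  exact Nat.le_of_mul_le_mul_right h2 (by norm_num)

end FDPC

open FDPC in
/-- The number `A_w` of codewords of weight `w` in `C_b` is at most
`Σ ∏_m C(A_m^{(ir)}, a_m)`, the sum over all tuples of nonnegative integers
`(a_m)` supported on even `m` with `4 ≤ m ≤ 4t` satisfying `Σ_m m·a_m = w`,
where `A_m^{(ir)} = ∏_{i=0}^{m/2−1}(2t−i)²/m`. -/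
theorem stmt_12 (t : ℕ) (ht : 2 ≤ t) (w : ℕ) (hw : w ≤ 4 * t ^ 2) :
    Set.ncard {x : colIdx t → ZMod 2 | Hb t *ᵥ x = 0 ∧ wt x = w} ≤
      ∑ a ∈ (Fintype.piFinset fun _ : Fin (4 * t + 1) => Finset.range (w + 1)).filter
          (fun a : Fin (4 * t + 1) → ℕ =>
            (∑ m : Fin (4 * t + 1), (m : ℕ) * a m) = w ∧
            ∀ m : Fin (4 * t + 1), ¬(Even (m : ℕ) ∧ 4 ≤ (m : ℕ)) → a m = 0),
        ∏ m : Fin (4 * t + 1),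
          Nat.choose ((∏ i ∈ Finset.range ((m : ℕ) / 2), (2 * t - i) ^ 2) / (m : ℕ)) (a m) := by
  classical
  -- set of codewords as a Finset
  have hset : {x : colIdx t → ZMod 2 | Hb t *ᵥ x = 0 ∧ wt x = w}
      = ↑(Finset.univ.filter (fun x : colIdx t → ZMod 2 => Hb t *ᵥ x = 0 ∧ wt x = w)) := by
    ext x
    simp
  rw [hset, Set.ncard_coe_finset]
  set S := Finset.univ.filter (fun x : colIdx t → ZMod 2 => Hb t *ᵥ x = 0 ∧ wt x = w)
    with hS
  set A := (Fintype.piFinset fun _ : Fin (4 * t + 1) => Finset.range (w + 1)).filter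
      (fun a : Fin (4 * t + 1) → ℕ =>
        (∑ m : Fin (4 * t + 1), (m : ℕ) * a m) = w ∧
        ∀ m : Fin (4 * t + 1), ¬(Even (m : ℕ) ∧ 4 ≤ (m : ℕ)) → a m = 0) with hA
  -- decomposition via choice
  let D : (colIdx t → ZMod 2) → Finset (colIdx t → ZMod 2) := fun x =>
    if h : Hb t *ᵥ x = 0 then (exists_decomp h).choose else ∅
  have hD : ∀ (x : colIdx t → ZMod 2), Hb t *ᵥ x = 0 →
      (∀ y ∈ D x, Irred t y) ∧ (∑ y ∈ D x, y) = x ∧ (∑ y ∈ D x, wt y) = wt x ∧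
      (∀ y ∈ D x, supp y ⊆ supp x) := by
    intro x h
    simp only [D, dif_pos h]
    exact (exists_decomp h).choose_spec
  -- bucket index
  let g : (colIdx t → ZMod 2) → Fin (4*t+1) := fun y => ⟨min (wt y) (4*t), by omega⟩
  have hgwt : ∀ (x : colIdx t → ZMod 2), Hb t *ᵥ x = 0 → ∀ y ∈ D x,
      ∀ m : Fin (4*t+1), g y = m → wt y = (m : ℕ) := by
    intro x hx y hy m hm
    have hirr := (hD x hx).1 y hy
    have hfacts := irred_facts hirr
    have := congrArg Fin.val hm
    simp only [g] at this
    omega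
  have hgirr : ∀ (x : colIdx t → ZMod 2), Hb t *ᵥ x = 0 → ∀ y ∈ D x,
      ∀ m : Fin (4*t+1), g y = m → Even (m : ℕ) ∧ 4 ≤ (m : ℕ) := by
    intro x hx y hy m hm
    have hirr := (hD x hx).1 y hy
    obtain ⟨he, h4, hle⟩ := irred_facts hirr
    have hwy := hgwt x hx y hy m hm
    rw [← hwy]
    exact ⟨he, h4⟩
  -- the tuple map
  let F : (colIdx t → ZMod 2) → (Fin (4*t+1) → ℕ) := fun x m =>
    ((D x).filter (fun y => g y = m)).card
  -- weighted sum of the tuple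
  have hsum : ∀ x ∈ S, (∑ m : Fin (4*t+1), (m : ℕ) * F x m) = w := by
    intro x hx
    rw [hS, Finset.mem_filter] at hx
    obtain ⟨-, hker, hwt⟩ := hx
    have h1 := Finset.sum_fiberwise_of_maps_to
      (fun y (_ : y ∈ D x) => Finset.mem_univ (g y)) (fun y => wt y)
    have h2 : ∀ m : Fin (4*t+1), (∑ y ∈ (D x).filter (fun y => g y = m), wt y)
        = (m : ℕ) * F x m := by
      intro m
      have : ∀ y ∈ (D x).filter (fun y => g y = m), wt y = (m : ℕ) := by
        intro y hy
        rw [Finset.mem_filter] at hy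
        exact hgwt x hker y hy.1 m hy.2
      rw [Finset.sum_congr rfl this, Finset.sum_const, smul_eq_mul, mul_comm]
    rw [← hwt, ← (hD x hker).2.2.1, ← h1]
    exact Finset.sum_congr rfl (fun m _ => (h2 m).symm)
  -- F maps S into A
  have hmaps : ∀ x ∈ S, F x ∈ A := by
    intro x hx
    have hker : Hb t *ᵥ x = 0 := by
      rw [hS, Finset.mem_filter] at hx
      exact hx.2.1
    rw [hA, Finset.mem_filter]
    refine ⟨?_, hsum x hx, ?_⟩
    · rw [Fintype.mem_piFinset]
      intro m
      rw [Finset.mem_range]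
      -- F x m ≤ w
      by_cases hm0 : (m : ℕ) = 0
      · have : F x m = 0 := by
          rw [Finset.card_eq_zero]
          rw [Finset.filter_eq_empty_iff]
          intro y hy hgy
          have := hgirr x hker y hy m hgy
          omega
        omega
      · have hle : (m : ℕ) * F x m ≤ w := by
          rw [← hsum x hx]
          exact Finset.single_le_sum (f := fun m : Fin (4*t+1) => (m : ℕ) * F x m)
            (fun i _ => Nat.zero_le _) (Finset.mem_univ m)
        have h1 : F x m ≤ (m : ℕ) * F x m := Nat.le_mul_of_pos_left _ (by omega)
        omega
    · intro m hm
      by_contra hne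
      obtain ⟨y, hy⟩ := Finset.card_pos.1 (Nat.pos_of_ne_zero hne)
      rw [Finset.mem_filter] at hy
      exact hm (hgirr x hker y hy.1 m hy.2)
  -- fiberwise count
  rw [Finset.card_eq_sum_card_fiberwise hmaps]
  apply Finset.sum_le_sum
  intro a ha
  -- each fiber injects into products of subsets of irreducibles
  have hcard : (S.filter (fun x => F x = a)).card ≤
      (Fintype.piFinset (fun m : Fin (4*t+1) => ((IrrF t (m : ℕ)).powersetCard (a m)))).card := by
    apply Finset.card_le_card_of_injOn (fun x => fun m => (D x).filter (fun y => g y = m))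
    · intro x hx
      rw [Finset.mem_coe, Finset.mem_filter] at hx
      obtain ⟨hxS, hFa⟩ := hx
      have hker : Hb t *ᵥ x = 0 := by
        rw [hS, Finset.mem_filter] at hxS
        exact hxS.2.1
      rw [Finset.mem_coe, Fintype.mem_piFinset]
      intro m
      rw [Finset.mem_powersetCard]
      constructor
      · intro y hy
        rw [Finset.mem_filter] at hy
        rw [mem_IrrF]
        exact ⟨(hD x hker).1 y hy.1, hgwt x hker y hy.1 m hy.2⟩
      · rw [← hFa]
    · intro x hx x' hx' heq
      simp only [Finset.coe_filter, Set.mem_setOf_eq] at hx hx'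
      have hker : Hb t *ᵥ x = 0 := by
        have := hx.1; rw [hS, Finset.mem_filter] at this; exact this.2.1
      have hker' : Hb t *ᵥ x' = 0 := by
        have := hx'.1; rw [hS, Finset.mem_filter] at this; exact this.2.1
      have h1 := Finset.sum_fiberwise_of_maps_to
        (fun y (_ : y ∈ D x) => Finset.mem_univ (g y)) (fun y => y)
      have h1' := Finset.sum_fiberwise_of_maps_to
        (fun y (_ : y ∈ D x') => Finset.mem_univ (g y)) (fun y => y)
      have hx2 : x = ∑ m : Fin (4*t+1), ∑ y ∈ (D x).filter (fun y => g y = m), y := by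
        rw [h1, (hD x hker).2.1]
      have hx2' : x' = ∑ m : Fin (4*t+1), ∑ y ∈ (D x').filter (fun y => g y = m), y := by
        rw [h1', (hD x' hker').2.1]
      rw [hx2, hx2']
      apply Finset.sum_congr rfl
      intro m _
      have heq2 : Finset.filter (fun y => g y = m) (D x)
          = Finset.filter (fun y => g y = m) (D x') := by
        have := congrFun heq m
        simpa using this
      rw [heq2]
  refine hcard.trans ?_
  rw [Fintype.card_piFinset]
  apply Finset.prod_le_prod'
  intro m _
  rw [Finset.card_powersetCard]
  exact Nat.choose_le_choose _ (card_IrrF_le t (m : ℕ))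
end
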